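/- arXiv:math/0405253 — 3 statements merged into one kernel-verified Lean document; each statement's English description precedes it below -/
import Mathlib

section
/- Let R be a commutative ring with a Poisson bracket and let I be a Poisson ideal of R (i.e. {R,I} ⊆ I). Then the radical of I is also a Poisson ideal of R. -/
/-- If `I` is a Poisson ideal of a Poisson algebra `R` (char 0),
then the radical of `I` is also a Poisson ideal. -/
theorem radical_of_poisson_ideal_is_poisson
    (R : Type*) [CommRing R] [Algebra ℚ R]
    (b : R → R → R)
    (hadd_l : ∀ x y z : R, b (x + y) z = b x z + b y z)
    (hadd_r : ∀ x y z : R, b x (y + z) = b x y + b x z)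
    (hsmul_l : ∀ (c : ℚ) (x y : R), b (c • x) y = c • b x y)
    (hsmul_r : ∀ (c : ℚ) (x y : R), b x (c • y) = c • b x y)
    (hskew : ∀ x y : R, b x y = - b y x)
    (hleib : ∀ x y z : R, b (x * y) z = x * b y z + b x z * y)
    (hjac : ∀ x y z : R, b x (b y z) = b (b x y) z + b y (b x z))
    (I : Ideal R) (hI : ∀ r : R, ∀ x ∈ I, b r x ∈ I) :
    ∀ r : R, ∀ x ∈ I.radical, b r x ∈ I.radical := by
  -- dividing by a nonzero natural number
  have hdiv : ∀ (c : ℕ), c ≠ 0 → ∀ z : R, (c : R) * z ∈ I → z ∈ I := by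
    intro c hc z hz
    have hz' : ((c : ℚ)⁻¹) • ((c : R) * z) ∈ I := by
      rw [Algebra.smul_def]
      exact I.mul_mem_left _ hz
    have : ((c : ℚ)⁻¹) • ((c : R) * z) = z := by
      rw [Algebra.smul_def, ← mul_assoc]
      have : (c : R) = algebraMap ℚ R (c : ℚ) := by
        simp
      rw [this, ← map_mul, inv_mul_cancel₀ (by exact_mod_cast hc), map_one, one_mul]
    rwa [this] at hz'
  intro r x hx
  -- derivation in second slot
  have hD_mul : ∀ y z : R, b r (y * z) = y * b r z + b r y * z := by
    intro y z
    rw [hskew r (y * z), hleib y z r, hskew y r, hskew z r]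
    ring
  have hDpow : ∀ (y : R) (m : ℕ), b r (y ^ (m + 1)) = ((m : R) + 1) * (y ^ m * b r y) := by
    intro y m
    induction m with
    | zero => simp
    | succ m ih =>
      rw [pow_succ y (m + 1), hD_mul, ih]
      push_cast
      ring
  obtain ⟨n, hxn⟩ := hx
  rcases Nat.eq_zero_or_pos n with hn | hn
  · subst hn
    simp only [pow_zero] at hxn
    exact Ideal.le_radical (by simpa using I.mul_mem_left (b r x) hxn)
  set d := b r x with hd
  -- main claim
  have key : ∀ k : ℕ, x ^ (n - 1 - k) * d ^ (2 * k + 1) ∈ I := by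
    intro k
    induction k with
    | zero =>
      have h1 : b r (x ^ n) ∈ I := hI r _ hxn
      have hn' : n = (n - 1) + 1 := by omega
      rw [hn', hDpow] at h1
      have : ((n - 1 : ℕ) : R) + 1 = ((n : ℕ) : R) := by
        rw [hn']; push_cast; ring
      rw [this] at h1
      have := hdiv n (by omega) _ h1
      simpa using this
    | succ k ih =>
      rcases le_or_gt n (k + 1) with hkn | hkn
      · -- exponent of x is already 0
        have e0 : n - 1 - k = 0 := by omega
        have e1 : n - 1 - (k + 1) = 0 := by omega
        rw [e0] at ih
        rw [e1]
        have h2 : x ^ (0 : ℕ) * d ^ (2 * (k + 1) + 1)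
            = d ^ 2 * (x ^ (0 : ℕ) * d ^ (2 * k + 1)) := by
          rw [show 2 * (k + 1) + 1 = (2 * k + 1) + 2 by ring, pow_add]
          ring
        rw [h2]
        exact I.mul_mem_left _ ih
      · set a := n - 1 - (k + 1) with ha
        have hx_eq : n - 1 - k = a + 1 := by omega
        rw [hx_eq] at ih
        have h1 : b r (x ^ (a + 1) * d ^ (2 * k + 1)) ∈ I := hI r _ ih
        have keyeq : ((a : R) + 1) * (x ^ a * d ^ (2 * (k + 1) + 1))
            = d * b r (x ^ (a + 1) * d ^ (2 * k + 1))
              - ((2 * k : R) + 1) * ((x ^ (a + 1) * d ^ (2 * k + 1)) * b r d) := by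
          rw [hD_mul, hDpow, hDpow]
          push_cast
          ring
        have hmem : ((a : R) + 1) * (x ^ a * d ^ (2 * (k + 1) + 1)) ∈ I := by
          rw [keyeq]
          exact I.sub_mem (I.mul_mem_left d h1)
            (I.mul_mem_left _ (I.mul_mem_right _ ih))
        have : (((a + 1 : ℕ) : R)) * (x ^ a * d ^ (2 * (k + 1) + 1)) ∈ I := by
          push_cast
          exact hmem
        exact hdiv (a + 1) (by omega) _ this
  refine ⟨2 * (n - 1) + 1, ?_⟩
  have := key (n - 1)
  simpa using this
end

section
/- Let R be a Noetherian Poisson algebra and N a finitely generated Poisson R-module. Then every associated prime of N is a Poisson ideal of R. -/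
/-!
For `r : R`, the map `δ = {r, -}` is a derivation of `R`, and `D = {r, -}_N` satisfies
`D (a • n) = δ a • n + a • D n`. Since `δ (P ^ (k + 1)) ⊆ P ^ k`, `D` sends the elements killed by
`P ^ (k + 1)` to elements killed by `P ^ (k + 2)`; once this increasing chain of submodules
stabilizes (`N` is Noetherian), `D` preserves its stable member `Γ`. Hence `Ann Γ` is a
`δ`-stable ideal, and its radical is `P` because `P = Ann m` with `m ∈ Γ`. Over `ℚ` the radical
of a `δ`-stable ideal is `δ`-stable (Seidenberg): if `x ^ n ∈ I` then `(δ x) ^ (2 n) ∈ I`.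
-/

namespace Derivation

variable {A R : Type*} [CommSemiring A] [CommRing R] [Algebra A R] (δ : Derivation A R R)

theorem map_mem_pow_of_mem_pow_succ {I : Ideal R} {k : ℕ} {q : R} (hq : q ∈ I ^ (k + 1)) :
    δ q ∈ I ^ k := by
  induction k generalizing q with
  | zero => simp
  | succ k ih =>
    rw [pow_succ] at hq
    refine Submodule.mul_induction_on hq (fun a ha c hc => ?_) (fun u v hu hv => ?_)
    · rw [leibniz, smul_eq_mul, smul_eq_mul, mul_comm c, pow_succ]
      exact add_mem (Ideal.mul_mem_right _ _ ha) (Ideal.mul_mem_mul (ih ha) hc)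
    · rw [map_add]
      exact add_mem hu hv

section Seidenberg

variable [Algebra ℚ R] {I : Ideal R} (hI : ∀ z ∈ I, δ z ∈ I)
include hI

theorem pow_add_two_mul_pow_mem {x : R} {m d : ℕ} (h : δ x ^ m * x ^ (d + 1) ∈ I) :
    δ x ^ (m + 2) * x ^ d ∈ I := by
  have hunit : IsUnit ((d + 1 : ℕ) : R) := by
    rw [← _root_.map_natCast (algebraMap ℚ R)]
    exact (Ne.isUnit (by positivity)).map _
  have key : ((d + 1 : ℕ) : R) * (δ x ^ (m + 2) * x ^ d) =
      δ x * δ (δ x ^ m * x ^ (d + 1)) - m * δ (δ x) * (δ x ^ m * x ^ (d + 1)) := by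
    rw [leibniz, leibniz_pow, leibniz_pow]
    rcases m with _ | m
    · simp only [pow_zero, nsmul_eq_mul, smul_eq_mul]; push_cast; ring
    · simp only [nsmul_eq_mul, smul_eq_mul, Nat.add_sub_cancel]; push_cast; ring
  rw [← Ideal.unit_mul_mem_iff_mem I hunit, key]
  exact sub_mem (Ideal.mul_mem_left _ _ (hI _ h)) (Ideal.mul_mem_left _ _ h)

theorem pow_mul_pow_mem_of_pow_add_mem {x : R} (j : ℕ) {d : ℕ} (h : x ^ (j + d) ∈ I) :
    δ x ^ (2 * j) * x ^ d ∈ I := by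
  induction j generalizing d with
  | zero => simpa using h
  | succ j ih =>
    rw [add_right_comm, add_assoc] at h
    simpa [mul_add] using δ.pow_add_two_mul_pow_mem hI (ih h)

theorem map_mem_radical {x : R} (hx : x ∈ I.radical) : δ x ∈ I.radical := by
  obtain ⟨n, hn⟩ := hx
  exact ⟨2 * n, by simpa using δ.pow_mul_pow_mem_of_pow_add_mem hI n (d := 0) (by simpa using hn)⟩

end Seidenberg

end Derivation

open Submodule

theorem exists_torsionBySet_pow_succ_eq {R N : Type*} [CommRing R] [AddCommGroup N] [Module R N]
    [IsNoetherian R N] (P : Ideal R) :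
    ∃ k, torsionBySet R N ↑(P ^ (k + 1)) = torsionBySet R N ↑(P ^ (k + 2)) := by
  obtain ⟨k, hk⟩ := monotone_stabilizes_iff_noetherian.mpr ‹_›
    ⟨fun k => torsionBySet R N ↑(P ^ k), fun i j h => torsionBySet_le_torsionBySet_pow i j h P⟩
  exact ⟨k, (hk (k + 1) (by omega)).symm.trans (hk (k + 2) (by omega))⟩

theorem IsAssociatedPrime.eq_radical_annihilator_torsionBySet_pow {R N : Type*} [CommRing R]
    [IsNoetherianRing R] [AddCommGroup N] [Module R N] {P : Ideal R}
    (hP : IsAssociatedPrime P N) {k : ℕ} (hk : k ≠ 0) :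
    P = (torsionBySet R N ↑(P ^ k)).annihilator.radical := by
  obtain ⟨hprime, m, hm⟩ := isAssociatedPrime_iff.mp hP
  have hkill : P ^ k ≤ (torsionBySet R N ↑(P ^ k)).annihilator :=
    fun q hq => mem_annihilator.mpr fun n hn => (mem_torsionBySet_iff _ _).mp hn ⟨q, hq⟩
  have hm_mem : m ∈ torsionBySet R N ↑(P ^ k) := by
    refine (mem_torsionBySet_iff _ _).mpr fun ⟨q, hq⟩ => ?_
    have hqP : q ∈ colon ⊥ {m} := hm ▸ Ideal.pow_le_self hk hq
    simpa using mem_colon_singleton.mp hqP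
  refine le_antisymm (fun x hx => ⟨k, hkill (Ideal.pow_mem_pow hx k)⟩) ?_
  refine hprime.isRadical.radical_le_iff.mpr fun z hz => ?_
  rw [hm, mem_colon_singleton, mem_bot]
  exact mem_annihilator.mp hz m hm_mem

section CompatibleMap

variable {A R N : Type*} [CommSemiring A] [CommRing R] [Algebra A R] [AddCommGroup N] [Module R N]
  {δ : Derivation A R R} {D : N → N} (hD : ∀ (r : R) (n : N), D (r • n) = δ r • n + r • D n)
include hD

theorem map_zero_of_leibniz : D 0 = 0 := by
  simpa using hD 0 0

theorem map_mem_torsionBySet_pow_succ_succ {P : Ideal R} {k : ℕ} {n : N}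
    (hn : n ∈ torsionBySet R N ↑(P ^ (k + 1))) : D n ∈ torsionBySet R N ↑(P ^ (k + 2)) := by
  have hkill : ∀ q ∈ P ^ (k + 1), q • n = 0 := fun q hq => (mem_torsionBySet_iff _ _).mp hn ⟨q, hq⟩
  suffices P ^ (k + 1) * P ≤ Ideal.torsionOf R N (D n) from
    (mem_torsionBySet_iff _ _).mpr fun ⟨q, hq⟩ => this (pow_succ P (k + 1) ▸ hq)
  refine mul_le.mpr fun i hi j hj => ?_
  have hi_smul : i • D n = -(δ i • n) := by
    have := hD i n
    rw [hkill i hi, map_zero_of_leibniz hD] at this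
    exact eq_neg_of_add_eq_zero_right this.symm
  have hji : j * δ i ∈ P ^ (k + 1) := by
    rw [pow_succ']
    exact Ideal.mul_mem_mul hj (δ.map_mem_pow_of_mem_pow_succ hi)
  rw [Ideal.mem_torsionOf_iff, mul_comm, mul_smul, hi_smul, smul_neg, ← mul_smul, hkill _ hji,
    neg_zero]

theorem map_mem_annihilator {M : Submodule R N} (hM : ∀ n ∈ M, D n ∈ M) {z : R}
    (hz : z ∈ M.annihilator) : δ z ∈ M.annihilator := by
  rw [mem_annihilator] at hz ⊢
  intro n hn
  have := hD z n
  rwa [hz n hn, hz _ (hM n hn), map_zero_of_leibniz hD, add_zero, eq_comm] at this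

theorem IsAssociatedPrime.map_mem_of_derivation [Algebra ℚ R] [IsNoetherianRing R]
    [Module.Finite R N] {P : Ideal R} (hP : IsAssociatedPrime P N) {x : R} (hx : x ∈ P) :
    δ x ∈ P := by
  obtain ⟨k, hk⟩ := exists_torsionBySet_pow_succ_eq (N := N) P
  have hstable : ∀ n ∈ torsionBySet R N ↑(P ^ (k + 1)), D n ∈ torsionBySet R N ↑(P ^ (k + 1)) :=
    fun n hn => hk ▸ map_mem_torsionBySet_pow_succ_succ hD hn
  rw [hP.eq_radical_annihilator_torsionBySet_pow k.succ_ne_zero] at hx ⊢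
  exact δ.map_mem_radical (fun z => map_mem_annihilator hD hstable) hx

end CompatibleMap

def hamiltonianDerivation {R : Type*} [CommRing R] (b : R → R → R)
    (hbadd_r : ∀ x y z : R, b x (y + z) = b x y + b x z) (hskew : ∀ x y : R, b x y = - b y x)
    (hleib : ∀ x y z : R, b (x * y) z = x * b y z + b x z * y) (r : R) : Derivation ℤ R R :=
  Derivation.mk' (AddMonoidHom.mk' (b r) (hbadd_r r)).toIntLinearMap fun u v => by
    simp only [AddMonoidHom.coe_toIntLinearMap, AddMonoidHom.mk'_apply, smul_eq_mul]
    rw [hskew r, hleib, hskew u, hskew v]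
    ring

theorem associated_primes_of_poisson_module_are_poisson_general
    (R : Type*) [CommRing R] [IsNoetherianRing R] [Algebra ℂ R]
    (N : Type*) [AddCommGroup N] [Module R N] [Module.Finite R N]
    (b : R → R → R)
    (hbadd_r : ∀ x y z : R, b x (y + z) = b x y + b x z)
    (hskew : ∀ x y : R, b x y = - b y x)
    (hleib : ∀ x y z : R, b (x * y) z = x * b y z + b x z * y)
    (bm : R → N → N)
    (hbmleib : ∀ (r r' : R) (n : N), bm r (r' • n) = (b r r') • n + r' • bm r n)
    (P : Ideal R) (hP : IsAssociatedPrime P N) :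
    ∀ r : R, ∀ x ∈ P, b r x ∈ P := by
  intro r x hx
  let : Algebra ℚ R := ((algebraMap ℂ R).comp (algebraMap ℚ ℂ)).toAlgebra
  exact IsAssociatedPrime.map_mem_of_derivation (δ := hamiltonianDerivation b hbadd_r hskew hleib r)
    (hbmleib r) hP hx

/-- Associated primes of a finitely generated Poisson module over a
Noetherian Poisson algebra are Poisson ideals. -/
theorem associated_primes_of_poisson_module_are_poisson
    (R : Type*) [CommRing R] [IsNoetherianRing R] [Algebra ℂ R]
    (N : Type*) [AddCommGroup N] [Module R N] [Module ℂ N] [Module.Finite R N]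
    (b : R → R → R)
    (hbadd_l : ∀ x y z : R, b (x + y) z = b x z + b y z)
    (hbadd_r : ∀ x y z : R, b x (y + z) = b x y + b x z)
    (hbsmul_l : ∀ (c : ℂ) (x y : R), b ((algebraMap ℂ R c) * x) y = (algebraMap ℂ R c) * b x y)
    (hbsmul_r : ∀ (c : ℂ) (x y : R), b x ((algebraMap ℂ R c) * y) = (algebraMap ℂ R c) * b x y)
    (hskew : ∀ x y : R, b x y = - b y x)
    (hleib : ∀ x y z : R, b (x * y) z = x * b y z + b x z * y)
    (hjac : ∀ x y z : R, b x (b y z) = b (b x y) z + b y (b x z))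
    (bm : R → N → N)
    (hbmadd_l : ∀ (x y : R) (n : N), bm (x + y) n = bm x n + bm y n)
    (hbmadd_r : ∀ (x : R) (n n' : N), bm x (n + n') = bm x n + bm x n')
    (hbmsmul : ∀ (c : ℂ) (x : R) (n : N), bm x (c • n) = c • bm x n)
    (hbmleib : ∀ (r r' : R) (n : N), bm r (r' • n) = (b r r') • n + r' • bm r n)
    (P : Ideal R) (hP : IsAssociatedPrime P N) :
    ∀ r : R, ∀ x ∈ P, b r x ∈ P :=
  associated_primes_of_poisson_module_are_poisson_general R N b hbadd_r hskew hleib bm hbmleib P hP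
end

section
/- Let R be a Noetherian Poisson algebra, N a finitely generated Poisson R-module, and P an associated prime of N. Then L = {n ∈ N : P^i · n = 0 for some i ≥ 0} is a nonzero Poisson submodule of N, i.e. {R, L}_N ⊆ L. -/
/-!
If `P ^ i` kills `n`, then for `t ∈ P ^ i` the Leibniz rule gives `t • {r, n} = -({r, t} • n)`,
which is killed by the remaining `P ^ i`; so `P ^ (2 i)` kills `{r, n}`. An element whose
annihilator is `P` (it exists since `R` is Noetherian) is a nonzero element of `L`.
-/

namespace Ideal

variable {R : Type*} [CommRing R] (P : Ideal R) (N : Type*) [AddCommGroup N] [Module R N]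

def powTorsion : Submodule R N where
  carrier := {n | ∃ i : ℕ, ∀ r ∈ P ^ i, r • n = 0}
  zero_mem' := ⟨0, fun r _ => smul_zero r⟩
  add_mem' := by
    rintro n n' ⟨i, hi⟩ ⟨j, hj⟩
    refine ⟨i + j, fun r hr => ?_⟩
    rw [smul_add, hi r (pow_le_pow_right (Nat.le_add_right i j) hr),
      hj r (pow_le_pow_right (Nat.le_add_left j i) hr), add_zero]
  smul_mem' := by
    rintro s n ⟨i, hi⟩
    exact ⟨i, fun r hr => by rw [smul_comm, hi r hr, smul_zero]⟩

variable {P N} {δ : R → R} {D : N →+ N}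

theorem smul_map_eq_zero_of_mem_mul {I : Ideal R}
    (hD : ∀ (t : R) (n : N), D (t • n) = δ t • n + t • D n) {n : N} (hn : ∀ r ∈ I, r • n = 0) :
    ∀ r ∈ I * I, r • D n = 0 := by
  have smul_map : ∀ t ∈ I, t • D n = -(δ t • n) := fun t ht =>
    eq_neg_of_add_eq_zero_right (by rw [← hD, hn t ht, map_zero])
  intro r hr
  refine Submodule.mul_induction_on hr (fun s hs t ht => ?_) (fun r r' hr hr' => ?_)
  · rw [mul_smul, smul_map t ht, smul_neg, smul_comm, hn s hs, smul_zero, neg_zero]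
  · rw [add_smul, hr, hr', add_zero]

theorem map_mem_powTorsion (hD : ∀ (t : R) (n : N), D (t • n) = δ t • n + t • D n) {n : N}
    (hn : n ∈ P.powTorsion N) : D n ∈ P.powTorsion N := by
  obtain ⟨i, hi⟩ := hn
  exact ⟨i + i, fun r hr => smul_map_eq_zero_of_mem_mul hD hi r (pow_add P i i ▸ hr)⟩

end Ideal

theorem IsAssociatedPrime.exists_ne_zero_mem_powTorsion {R N : Type*} [CommRing R]
    [IsNoetherianRing R] [AddCommGroup N] [Module R N] {P : Ideal R}
    (hP : IsAssociatedPrime P N) : ∃ n ∈ P.powTorsion N, n ≠ 0 := by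
  obtain ⟨hPprime, x, hx⟩ := isAssociatedPrime_iff.mp hP
  refine ⟨x, ⟨1, fun r hr => ?_⟩, ?_⟩
  · rwa [pow_one, hx, Submodule.mem_colon_singleton, Submodule.mem_bot] at hr
  · rintro rfl
    rw [Submodule.colon_singleton_zero] at hx
    exact hPprime.ne_top hx

theorem poisson_submodule_of_associated_prime_general
    (R : Type*) [CommRing R] [IsNoetherianRing R]
    (N : Type*) [AddCommGroup N] [Module R N]
    (b : R → R → R)
    (bm : R → N → N)
    (hbmadd_r : ∀ (x : R) (n n' : N), bm x (n + n') = bm x n + bm x n')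
    (hbmleib : ∀ (r r' : R) (n : N), bm r (r' • n) = (b r r') • n + r' • bm r n)
    (P : Ideal R) (hP : IsAssociatedPrime P N)
    (L : Set N) (hL : L = {n : N | ∃ i : ℕ, ∀ r ∈ P ^ i, r • n = 0}) :
    (∃ n ∈ L, n ≠ 0) ∧
    (∀ n ∈ L, ∀ n' ∈ L, n + n' ∈ L) ∧
    (∀ (r : R), ∀ n ∈ L, r • n ∈ L) ∧
    (∀ (r : R), ∀ n ∈ L, bm r n ∈ L) := by
  subst hL
  exact ⟨hP.exists_ne_zero_mem_powTorsion,
    fun _ hn _ hn' => (P.powTorsion N).add_mem hn hn',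
    fun r _ hn => (P.powTorsion N).smul_mem r hn,
    fun r _ hn =>
      Ideal.map_mem_powTorsion (D := AddMonoidHom.mk' (bm r) (hbmadd_r r)) (hbmleib r) hn⟩

/-- For an associated prime `P` of a finitely generated Poisson module `N`,
`L = {n : ∃ i, P^i • n = 0}` is a nonzero Poisson submodule of `N`. -/
theorem poisson_submodule_of_associated_prime
    (R : Type*) [CommRing R] [IsNoetherianRing R] [Algebra ℂ R]
    (N : Type*) [AddCommGroup N] [Module R N] [Module ℂ N] [Module.Finite R N]
    (b : R → R → R)
    (hskew : ∀ x y : R, b x y = - b y x)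
    (hleib : ∀ x y z : R, b (x * y) z = x * b y z + b x z * y)
    (hjac : ∀ x y z : R, b x (b y z) = b (b x y) z + b y (b x z))
    (bm : R → N → N)
    (hbmadd_l : ∀ (x y : R) (n : N), bm (x + y) n = bm x n + bm y n)
    (hbmadd_r : ∀ (x : R) (n n' : N), bm x (n + n') = bm x n + bm x n')
    (hbmleib : ∀ (r r' : R) (n : N), bm r (r' • n) = (b r r') • n + r' • bm r n)
    (P : Ideal R) (hP : IsAssociatedPrime P N)
    (L : Set N) (hL : L = {n : N | ∃ i : ℕ, ∀ r ∈ P ^ i, r • n = 0}) :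
    (∃ n ∈ L, n ≠ 0) ∧
    (∀ n ∈ L, ∀ n' ∈ L, n + n' ∈ L) ∧
    (∀ (r : R), ∀ n ∈ L, r • n ∈ L) ∧
    (∀ (r : R), ∀ n ∈ L, bm r n ∈ L) :=
  poisson_submodule_of_associated_prime_general R N b bm hbmadd_r hbmleib P hP L hL
end
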